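/- arXiv:1306.1520 — 3 statements merged into one kernel-verified Lean document; each statement's English description precedes it below -/
import Mathlib

section
/- Let Π be a convex set of stochastic policies, ν a probability distribution on states, ε ≥ 0, and π ∈ Π. Then π is an ε-local optimum of J_ν over Π (i.e., for all π' ∈ Π, lim_{α→0}(ν·v_{(1-α)π+απ'} - ν·v_π)/α ≤ ε) if and only if π ∈ G_Π(π, d_{ν,π}, (1-γ)ε), i.e., for all π'' ∈ Π, d_{ν,π}·T_π v_π + (1-γ)ε ≥ d_{ν,π}·T_{π''} v_π. -/
open Matrix Filter Topology

section MDPdefs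

variable {S A : Type*}

/-- `P` is a transition kernel: nonnegative and each row sums to one. -/
def IsKernel [Fintype S] (P : S → A → S → ℝ) : Prop :=
  ∀ s a, (∀ s', 0 ≤ P s a s') ∧ ∑ s', P s a s' = 1

/-- A stochastic policy: a probability distribution over actions in each state. -/
def IsPolicy [Fintype A] (π : S → A → ℝ) : Prop :=
  ∀ s, (∀ a, 0 ≤ π s a) ∧ ∑ a, π s a = 1

/-- A probability distribution over states. -/
def IsDist [Fintype S] (μ : S → ℝ) : Prop :=
  (∀ s, 0 ≤ μ s) ∧ ∑ s, μ s = 1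

/-- The reward vector `r_π(s) = ∑_a π(a|s) r(s,a)`. -/
def rPol [Fintype A] (r : S → A → ℝ) (π : S → A → ℝ) : S → ℝ :=
  fun s => ∑ a, π s a * r s a

/-- The stochastic matrix `P_π(s,s') = ∑_a π(a|s) P(s'|s,a)`. -/
def PPol [Fintype A] (P : S → A → S → ℝ) (π : S → A → ℝ) : Matrix S S ℝ :=
  Matrix.of fun s s' => ∑ a, π s a * P s a s'

/-- The Bellman operator `T_π v = r_π + γ P_π v`. -/
noncomputable def bellman [Fintype S] [Fintype A] (P : S → A → S → ℝ) (r : S → A → ℝ)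
    (γ : ℝ) (π : S → A → ℝ) (v : S → ℝ) : S → ℝ :=
  rPol r π + γ • (PPol P π *ᵥ v)

/-- The optimal Bellman operator `(Tv)(s) = max_a [r(s,a) + γ ∑_{s'} P(s'|s,a) v(s')]`. -/
noncomputable def optBellman [Fintype S] [Fintype A] [Nonempty A] (P : S → A → S → ℝ)
    (r : S → A → ℝ) (γ : ℝ) (v : S → ℝ) : S → ℝ :=
  fun s => Finset.univ.sup' Finset.univ_nonempty fun a => r s a + γ * ∑ s', P s a s' * v s'

/-- The value function of policy `π`, `v_π = (I - γ P_π)⁻¹ r_π`, the unique solution of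
`v = r_π + γ P_π v` when `0 ≤ γ < 1`. -/
noncomputable def valueFn [Fintype S] [Fintype A] [DecidableEq S] (P : S → A → S → ℝ)
    (r : S → A → ℝ) (γ : ℝ) (π : S → A → ℝ) : S → ℝ :=
  ((1 : Matrix S S ℝ) - γ • PPol P π)⁻¹ *ᵥ rPol r π

/-- The γ-weighted occupancy measure `d_{μ,π} = (1-γ) μ (I - γ P_π)⁻¹` (a row vector). -/
noncomputable def occ [Fintype S] [Fintype A] [DecidableEq S] (P : S → A → S → ℝ)
    (γ : ℝ) (μ : S → ℝ) (π : S → A → ℝ) : S → ℝ :=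
  (1 - γ) • (μ ᵥ* ((1 : Matrix S S ℝ) - γ • PPol P π)⁻¹)

/-- The stochastic mixture `(1-α)π + απ'`. -/
def mix (α : ℝ) (π π' : S → A → ℝ) : S → A → ℝ :=
  fun s a => (1 - α) * π s a + α * π' s a

/-- The `ν`-greedy-complexity `E_ν(Π) = sup_{ρ∈Π} inf_{ρ'∈Π} d_{ν,ρ}·(T v_ρ - T_{ρ'} v_ρ)`. -/
noncomputable def greedyCplx [Fintype S] [Fintype A] [Nonempty A] [DecidableEq S]
    (P : S → A → S → ℝ) (r : S → A → ℝ) (γ : ℝ) (ν : S → ℝ)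
    (Pol : Set (S → A → ℝ)) : ℝ :=
  ⨆ ρ : Pol, ⨅ ρ' : Pol,
    occ P γ ν (ρ : S → A → ℝ) ⬝ᵥ
      (optBellman P r γ (valueFn P r γ (ρ : S → A → ℝ)) -
        bellman P r γ (ρ' : S → A → ℝ) (valueFn P r γ (ρ : S → A → ℝ)))

/-- `π` is an `ε`-local optimum of `J_ν` over `Pol`: for every `π' ∈ Pol`, the (one-sided)
limit of `(ν·v_{(1-α)π+απ'} - ν·v_π)/α` as `α → 0⁺` exists and is at most `ε`. -/
def IsLocalOpt [Fintype S] [Fintype A] [DecidableEq S]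
    (P : S → A → S → ℝ) (r : S → A → ℝ) (γ : ℝ) (ν : S → ℝ)
    (Pol : Set (S → A → ℝ)) (π : S → A → ℝ) (ε : ℝ) : Prop :=
  ∀ π' ∈ Pol, ∃ L ≤ ε,
    Tendsto (fun α : ℝ =>
        (ν ⬝ᵥ valueFn P r γ (mix α π π') - ν ⬝ᵥ valueFn P r γ π) / α)
      (𝓝[>] 0) (𝓝 L)

end MDPdefs

/-! The directional derivative of `J_ν` at `π` towards `π'` is
`(1 - γ)⁻¹ d_{ν,π} · (T_{π'} v_π - T_π v_π)`. Indeed the Bellman operator is affine in the policy,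
so with `π_α = (1 - α)π + απ'` and `v_π = T_π v_π` one gets
`(I - γ P_{π_α}) (v_{π_α} - v_π) = α (T_{π'} v_π - T_π v_π)`; and `α ↦ (I - γ P_{π_α})⁻¹` is
continuous because `γ P_{π_α}` has `ℓ^∞` operator norm `γ < 1`. Both sides of the equivalence are
the same bound on this derivative, direction by direction. -/

theorem Filter.Tendsto.exists_le_tendsto_iff {ι X : Type*} [TopologicalSpace X] [T2Space X] [LE X]
    {f : ι → X} {l : Filter ι} [l.NeBot] {D ε : X} (h : Tendsto f l (𝓝 D)) :
    (∃ L ≤ ε, Tendsto f l (𝓝 L)) ↔ D ≤ ε :=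
  ⟨fun ⟨_, hL, hf⟩ => tendsto_nhds_unique h hf ▸ hL, fun hD => ⟨D, hD, h⟩⟩

section linfty
attribute [local instance] Matrix.linftyOpNormedRing Matrix.linftyOpNormedAlgebra

theorem Matrix.isUnit_one_sub_smul_of_sum_abs_le_one {S : Type*} [Fintype S] [DecidableEq S]
    {Q : Matrix S S ℝ} (hQ : ∀ s, ∑ s', |Q s s'| ≤ 1) {γ : ℝ} (hγ : |γ| < 1) :
    IsUnit (1 - γ • Q) := by
  have : CompleteSpace (Matrix S S ℝ) := FiniteDimensional.complete ℝ _
  have hQ_norm : ‖Q‖ ≤ 1 := by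
    rw [Matrix.linfty_opNorm_def, NNReal.coe_le_one, Finset.sup_le_iff]
    intro s _
    rw [← NNReal.coe_le_one, NNReal.coe_sum]
    exact hQ s
  refine (Units.oneSub (γ • Q) ?_).isUnit
  rw [norm_smul, Real.norm_eq_abs]
  exact mul_lt_one_of_nonneg_of_lt_one_left (abs_nonneg γ) hγ hQ_norm

end linfty

section Policies

variable {S A : Type*} [Fintype A]

theorem IsPolicy.mix {π π' : S → A → ℝ} (hπ : IsPolicy π) (hπ' : IsPolicy π')
    {α : ℝ} (h0 : 0 ≤ α) (h1 : α ≤ 1) : IsPolicy (mix α π π') := fun s =>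
  ⟨fun a => add_nonneg (mul_nonneg (sub_nonneg.2 h1) ((hπ s).1 a)) (mul_nonneg h0 ((hπ' s).1 a)),
   by simp only [_root_.mix, Finset.sum_add_distrib, ← Finset.mul_sum, (hπ s).2, (hπ' s).2]; ring⟩

theorem rPol_mix (r : S → A → ℝ) (α : ℝ) (π π' : S → A → ℝ) :
    rPol r (mix α π π') = rPol r π + α • (rPol r π' - rPol r π) := by
  funext s
  simp only [rPol, mix, Pi.add_apply, Pi.smul_apply, Pi.sub_apply, smul_eq_mul, Finset.mul_sum,
    ← Finset.sum_sub_distrib, ← Finset.sum_add_distrib]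
  exact Finset.sum_congr rfl fun a _ => by ring

theorem PPol_mix (P : S → A → S → ℝ) (α : ℝ) (π π' : S → A → ℝ) :
    PPol P (mix α π π') = PPol P π + α • (PPol P π' - PPol P π) := by
  ext s s'
  simp only [PPol, mix, Matrix.add_apply, Matrix.smul_apply, Matrix.sub_apply, Matrix.of_apply,
    smul_eq_mul, Finset.mul_sum, ← Finset.sum_sub_distrib, ← Finset.sum_add_distrib]
  exact Finset.sum_congr rfl fun a _ => by ring

variable [Fintype S]

theorem PPol_nonneg {P : S → A → S → ℝ} (hP : IsKernel P) {π : S → A → ℝ} (hπ : IsPolicy π)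
    (s s' : S) : 0 ≤ PPol P π s s' :=
  Finset.sum_nonneg fun a _ => mul_nonneg ((hπ s).1 a) ((hP s a).1 s')

theorem sum_PPol_apply {P : S → A → S → ℝ} (hP : IsKernel P) {π : S → A → ℝ} (hπ : IsPolicy π)
    (s : S) : ∑ s', PPol P π s s' = 1 := by
  simp only [PPol, Matrix.of_apply]
  rw [Finset.sum_comm]
  simp_rw [← Finset.mul_sum, fun a => (hP s a).2, mul_one]
  exact (hπ s).2

theorem bellman_sub_bellman (P : S → A → S → ℝ) (r : S → A → ℝ) (γ : ℝ) (π : S → A → ℝ)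
    (v u : S → ℝ) : bellman P r γ π v - bellman P r γ π u = γ • (PPol P π *ᵥ (v - u)) := by
  simp only [bellman, Matrix.mulVec_sub, smul_sub]
  abel

theorem bellman_mix (P : S → A → S → ℝ) (r : S → A → ℝ) (γ α : ℝ) (π π' : S → A → ℝ)
    (v : S → ℝ) : bellman P r γ (mix α π π') v
      = bellman P r γ π v + α • (bellman P r γ π' v - bellman P r γ π v) := by
  simp only [bellman, rPol_mix, PPol_mix, Matrix.add_mulVec, Matrix.smul_mulVec,
    Matrix.sub_mulVec]
  module

variable [DecidableEq S]

theorem isUnit_one_sub_smul_PPol {P : S → A → S → ℝ} (hP : IsKernel P) {π : S → A → ℝ}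
    (hπ : IsPolicy π) {γ : ℝ} (hγ0 : 0 ≤ γ) (hγ1 : γ < 1) : IsUnit (1 - γ • PPol P π) :=
  Matrix.isUnit_one_sub_smul_of_sum_abs_le_one
    (fun s => by
      simp_rw [abs_of_nonneg (PPol_nonneg hP hπ s _)]
      exact (sum_PPol_apply hP hπ s).le)
    (abs_lt.2 ⟨by linarith, hγ1⟩)

theorem bellman_valueFn {P : S → A → S → ℝ} {r : S → A → ℝ} {γ : ℝ} {π : S → A → ℝ}
    (h : IsUnit (1 - γ • PPol P π)) : bellman P r γ π (valueFn P r γ π) = valueFn P r γ π := by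
  have hv : (1 - γ • PPol P π) *ᵥ valueFn P r γ π = rPol r π := by
    rw [valueFn, Matrix.mulVec_mulVec,
      Matrix.mul_nonsing_inv _ ((Matrix.isUnit_iff_isUnit_det _).1 h), Matrix.one_mulVec]
  rw [Matrix.sub_mulVec, Matrix.one_mulVec, Matrix.smul_mulVec] at hv
  rw [bellman, ← hv, sub_add_cancel]

theorem one_sub_smul_PPol_mulVec_valueFn_mix_sub {P : S → A → S → ℝ} {r : S → A → ℝ} {γ α : ℝ}
    {π π' : S → A → ℝ} (hπ : IsUnit (1 - γ • PPol P π))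
    (hmix : IsUnit (1 - γ • PPol P (mix α π π'))) :
    (1 - γ • PPol P (mix α π π')) *ᵥ (valueFn P r γ (mix α π π') - valueFn P r γ π)
      = α • (bellman P r γ π' (valueFn P r γ π) - bellman P r γ π (valueFn P r γ π)) := by
  have h := bellman_sub_bellman P r γ (mix α π π') (valueFn P r γ (mix α π π')) (valueFn P r γ π)
  rw [bellman_valueFn hmix, bellman_mix] at h
  rw [Matrix.sub_mulVec, Matrix.one_mulVec, Matrix.smul_mulVec, ← h, bellman_valueFn hπ]
  abel

theorem valueFn_mix_sub {P : S → A → S → ℝ} {r : S → A → ℝ} {γ α : ℝ}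
    {π π' : S → A → ℝ} (hπ : IsUnit (1 - γ • PPol P π))
    (hmix : IsUnit (1 - γ • PPol P (mix α π π'))) :
    valueFn P r γ (mix α π π') - valueFn P r γ π = α • ((1 - γ • PPol P (mix α π π'))⁻¹ *ᵥ
      (bellman P r γ π' (valueFn P r γ π) - bellman P r γ π (valueFn P r γ π))) := by
  rw [← Matrix.mulVec_smul, ← one_sub_smul_PPol_mulVec_valueFn_mix_sub hπ hmix,
    Matrix.mulVec_mulVec, Matrix.nonsing_inv_mul _ ((Matrix.isUnit_iff_isUnit_det _).1 hmix),
    Matrix.one_mulVec]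

theorem occ_dotProduct (P : S → A → S → ℝ) (γ : ℝ) (μ : S → ℝ) (π : S → A → ℝ) (w : S → ℝ) :
    occ P γ μ π ⬝ᵥ w = (1 - γ) * (μ ⬝ᵥ ((1 - γ • PPol P π)⁻¹ *ᵥ w)) := by
  rw [occ, smul_dotProduct, smul_eq_mul, Matrix.dotProduct_mulVec]

theorem continuousAt_inv_one_sub_smul_PPol_mix {P : S → A → S → ℝ} {γ : ℝ} {π : S → A → ℝ}
    (hπ : IsUnit (1 - γ • PPol P π)) (π' : S → A → ℝ) :
    ContinuousAt (fun α : ℝ => (1 - γ • PPol P (mix α π π'))⁻¹) 0 := by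
  have hinv : ContinuousAt Inv.inv (1 - γ • PPol P (mix 0 π π')) := by
    refine continuousAt_matrix_inv _ ?_
    rw [PPol_mix, zero_smul, add_zero]
    exact NormedRing.inverse_continuousAt ((Matrix.isUnit_iff_isUnit_det _).1 hπ).unit
  refine hinv.comp (f := fun α : ℝ => 1 - γ • PPol P (mix α π π')) ?_
  simp_rw [PPol_mix]
  fun_prop

theorem tendsto_slope_valueFn_mix {P : S → A → S → ℝ} (hP : IsKernel P) (r : S → A → ℝ) {γ : ℝ}
    (hγ0 : 0 ≤ γ) (hγ1 : γ < 1) (ν : S → ℝ) {π π' : S → A → ℝ} (hπ : IsPolicy π)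
    (hπ' : IsPolicy π') :
    Tendsto (fun α : ℝ => (ν ⬝ᵥ valueFn P r γ (mix α π π') - ν ⬝ᵥ valueFn P r γ π) / α)
      (𝓝[>] 0) (𝓝 ((1 - γ)⁻¹ * (occ P γ ν π ⬝ᵥ
        (bellman P r γ π' (valueFn P r γ π) - bellman P r γ π (valueFn P r γ π))))) := by
  set w := bellman P r γ π' (valueFn P r γ π) - bellman P r γ π (valueFn P r γ π)
  have hπ_unit : IsUnit (1 - γ • PPol P π) := isUnit_one_sub_smul_PPol hP hπ hγ0 hγ1
  have hslope : ∀ α ∈ Set.Ioc (0 : ℝ) 1,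
      ν ⬝ᵥ ((1 - γ • PPol P (mix α π π'))⁻¹ *ᵥ w)
        = (ν ⬝ᵥ valueFn P r γ (mix α π π') - ν ⬝ᵥ valueFn P r γ π) / α := fun α hα => by
    have hmix := isUnit_one_sub_smul_PPol hP (hπ.mix hπ' hα.1.le hα.2) hγ0 hγ1
    rw [← dotProduct_sub, valueFn_mix_sub hπ_unit hmix, dotProduct_smul, smul_eq_mul, mul_div_cancel_left₀ _ hα.1.ne']
  have hlim : ν ⬝ᵥ ((1 - γ • PPol P (mix 0 π π'))⁻¹ *ᵥ w) = (1 - γ)⁻¹ * (occ P γ ν π ⬝ᵥ w) := by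
    rw [occ_dotProduct, PPol_mix, zero_smul, add_zero, inv_mul_cancel_left₀ (by linarith)]
  have hcont : ContinuousAt (fun α : ℝ => ν ⬝ᵥ ((1 - γ • PPol P (mix α π π'))⁻¹ *ᵥ w)) 0 :=
    (continuous_const.dotProduct (continuous_id.matrix_mulVec continuous_const)).continuousAt.comp
      (continuousAt_inv_one_sub_smul_PPol_mix hπ_unit π')
  rw [← hlim]
  refine (hcont.tendsto.mono_left nhdsWithin_le_nhds).congr' ?_
  filter_upwards [Ioc_mem_nhdsGT one_pos] with α hα using hslope α hα

end Policies

theorem stmt_2_general {S A : Type*} [Fintype S] [Fintype A] [DecidableEq S]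
    (P : S → A → S → ℝ) (hP : IsKernel P) (r : S → A → ℝ) (γ : ℝ)
    (hγ0 : 0 ≤ γ) (hγ1 : γ < 1)
    (Pol : Set (S → A → ℝ)) (hPol : ∀ ρ ∈ Pol, IsPolicy ρ)
    (ν : S → ℝ) (ε : ℝ)
    (π : S → A → ℝ) (hπ : π ∈ Pol) :
    IsLocalOpt P r γ ν Pol π ε ↔
      ∀ π'' ∈ Pol,
        occ P γ ν π ⬝ᵥ bellman P r γ π'' (valueFn P r γ π)
          ≤ occ P γ ν π ⬝ᵥ bellman P r γ π (valueFn P r γ π) + (1 - γ) * ε := by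
  refine forall₂_congr fun π' hπ' => ?_
  rw [(tendsto_slope_valueFn_mix hP r hγ0 hγ1 ν (hPol π hπ) (hPol π' hπ')).exists_le_tendsto_iff,
    inv_mul_le_iff₀ (sub_pos.2 hγ1), dotProduct_sub, sub_le_iff_le_add']

/-- `π ∈ Π` is an `ε`-local optimum of `J_ν` over a convex `Π`
iff `π ∈ G_Π(π, d_{ν,π}, (1-γ)ε)`. -/
theorem stmt_2 {S A : Type*} [Fintype S] [Fintype A] [Nonempty S] [Nonempty A] [DecidableEq S]
    (P : S → A → S → ℝ) (hP : IsKernel P) (r : S → A → ℝ) (γ : ℝ)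
    (hγ0 : 0 ≤ γ) (hγ1 : γ < 1)
    (Pol : Set (S → A → ℝ)) (hPol : ∀ ρ ∈ Pol, IsPolicy ρ)
    (hconv : ∀ ρ ∈ Pol, ∀ ρ' ∈ Pol, ∀ α : ℝ, 0 ≤ α → α ≤ 1 → mix α ρ ρ' ∈ Pol)
    (ν : S → ℝ) (hν : IsDist ν) (ε : ℝ) (hε : 0 ≤ ε)
    (π : S → A → ℝ) (hπ : π ∈ Pol) :
    IsLocalOpt P r γ ν Pol π ε ↔
      ∀ π'' ∈ Pol,
        occ P γ ν π ⬝ᵥ bellman P r γ π'' (valueFn P r γ π)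
          ≤ occ P γ ν π ⬝ᵥ bellman P r γ π (valueFn P r γ π) + (1 - γ) * ε :=
  stmt_2_general P hP r γ hγ0 hγ1 Pol hPol ν ε π hπ
end

section
/- Let μ and ν be probability distributions on the states of a discounted MDP with γ ∈ [0,1), and let π_* be any stochastic policy. Define C*_{μ,ν} = (1-γ)² ∑_{i≥0} ∑_{j≥0} γ^{i+j} sup_π ‖μ (P_{π_*})^i (P_π)^j / ν‖_∞, where the supremum ranges over all stochastic policies π and ‖ρ/ν‖_∞ denotes the smallest C with ρ(s) ≤ C ν(s) for all s. Then (1-γ)·‖d_{μ,π_*}/ν‖_∞ ≤ C*_{μ,ν}. -/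
open Matrix Filter Topology

/-- The smallest constant `C ∈ [0,∞]` with `ρ(s) ≤ C ν(s)` for all `s` (extended reals). -/
noncomputable def eratio {S : Type*} [Fintype S] (ρ ν : S → ℝ) : ENNReal :=
  sInf {C : ENNReal | ∀ s, ENNReal.ofReal (ρ s) ≤ C * ENNReal.ofReal (ν s)}

/-!
Expanding the occupancy measure as `d_{μ,π*} = (1-γ) ∑ᵢ γⁱ μ P_{π*}ⁱ`, the ratio `‖·/ν‖_∞` is
subadditive over countable sums of nonnegative vectors and positively homogeneous, so
`(1-γ) ‖d_{μ,π*}/ν‖_∞ ≤ (1-γ)² ∑ᵢ γⁱ ‖μ P_{π*}ⁱ / ν‖_∞`; the `i`-th term is the summand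
`j = 0`, `π = π*` of `C*_{μ,ν}`.
-/

open scoped ENNReal

section eratio

variable {S : Type*} [Fintype S] {ρ ν : S → ℝ}

lemma eratio_le {C : ℝ≥0∞} (h : ∀ s, ENNReal.ofReal (ρ s) ≤ C * ENNReal.ofReal (ν s)) :
    eratio ρ ν ≤ C :=
  sInf_le h

/-- Finiteness is needed where `ν s = 0`, since `⊤ * 0 = 0`. -/
lemma ofReal_le_eratio_mul (hρν : eratio ρ ν ≠ ⊤) (s : S) :
    ENNReal.ofReal (ρ s) ≤ eratio ρ ν * ENNReal.ofReal (ν s) := by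
  obtain ⟨C, hC⟩ : {C : ℝ≥0∞ | ∀ s, ENNReal.ofReal (ρ s) ≤ C * ENNReal.ofReal (ν s)}.Nonempty :=
    Set.nonempty_iff_ne_empty.2 fun h => hρν (by rw [eratio, h, sInf_empty])
  by_cases hν0 : ENNReal.ofReal (ν s) = 0
  · simpa [hν0] using hC s
  have hνtop : ENNReal.ofReal (ν s) ≠ ⊤ := ENNReal.ofReal_ne_top
  rw [← ENNReal.div_le_iff hν0 hνtop]
  exact le_sInf fun C hC => (ENNReal.div_le_iff hν0 hνtop).2 (hC s)

lemma eratio_smul_le {c : ℝ} (hc : 0 ≤ c) :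
    eratio (c • ρ) ν ≤ ENNReal.ofReal c * eratio ρ ν := by
  rcases hc.eq_or_lt with rfl | hc
  · exact eratio_le fun s => by simp
  by_cases hρν : eratio ρ ν = ⊤
  · simp [hρν, ENNReal.mul_top, hc]
  refine eratio_le fun s => ?_
  rw [Pi.smul_apply, smul_eq_mul, ENNReal.ofReal_mul hc.le, mul_assoc]
  gcongr
  exact ofReal_le_eratio_mul hρν s

lemma eratio_le_tsum {ι : Type*} {ρs : ι → S → ℝ} (hρ : HasSum ρs ρ)
    (hρs : ∀ i s, 0 ≤ ρs i s) : eratio ρ ν ≤ ∑' i, eratio (ρs i) ν := by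
  by_cases htop : ∃ i, eratio (ρs i) ν = ⊤
  · obtain ⟨i, hi⟩ := htop
    exact le_top.trans_eq (top_le_iff.1 (hi ▸ ENNReal.le_tsum i)).symm
  push Not at htop
  refine eratio_le fun s => ?_
  have hρs_s : HasSum (fun i => ρs i s) (ρ s) := Pi.hasSum.1 hρ s
  calc ENNReal.ofReal (ρ s) = ∑' i, ENNReal.ofReal (ρs i s) := by
        rw [← hρs_s.tsum_eq, ENNReal.ofReal_tsum_of_nonneg (hρs · s) hρs_s.summable]
    _ ≤ ∑' i, eratio (ρs i) ν * ENNReal.ofReal (ν s) :=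
        ENNReal.tsum_le_tsum fun i => ofReal_le_eratio_mul (htop i) s
    _ = (∑' i, eratio (ρs i) ν) * ENNReal.ofReal (ν s) := ENNReal.tsum_mul_right

end eratio

namespace Matrix

variable {n : Type*} [Fintype n] [DecidableEq n] {M : Matrix n n ℝ}

lemma hasSum_geom_smul_of_mem_rowStochastic (hM : M ∈ rowStochastic ℝ n) {γ : ℝ}
    (hγ0 : 0 ≤ γ) (hγ1 : γ < 1) : HasSum (fun i : ℕ => (γ • M) ^ i) (1 - γ • M)⁻¹ := by
  let := Matrix.linftyOpNormedRing (n := n) (α := ℝ)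
  let := Matrix.linftyOpNormedAlgebra (n := n) (R := ℝ) (α := ℝ)
  have hM1 : ‖M‖ ≤ 1 := by
    rw [linfty_opNorm_def, NNReal.coe_le_one, Finset.sup_le_iff]
    intro i _
    rw [← NNReal.coe_le_coe, NNReal.coe_sum, NNReal.coe_one, ← sum_row_of_mem_rowStochastic hM i]
    exact (Finset.sum_congr rfl fun j _ => by
      rw [coe_nnnorm, Real.norm_of_nonneg (nonneg_of_mem_rowStochastic hM)]).le
  have hγM : ‖γ • M‖ < 1 := by
    rw [norm_smul, Real.norm_of_nonneg hγ0]
    nlinarith [norm_nonneg M]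
  rw [nonsing_inv_eq_ringInverse]
  exact hasSum_geom_series_inverse _ hγM

lemma hasSum_vecMul_geom_of_mem_rowStochastic (hM : M ∈ rowStochastic ℝ n) {γ : ℝ}
    (hγ0 : 0 ≤ γ) (hγ1 : γ < 1) (μ : n → ℝ) :
    HasSum (fun i : ℕ => γ ^ i • (μ ᵥ* M ^ i)) (μ ᵥ* (1 - γ • M)⁻¹) := by
  have h := (hasSum_geom_smul_of_mem_rowStochastic hM hγ0 hγ1).map (vecMulBilin ℝ ℝ μ)
    (continuous_const.matrix_vecMul continuous_id)
  simpa [Function.comp_def, smul_pow, vecMulBilin_apply, vecMul_smul] using h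

end Matrix

section MDP

variable {S A : Type*} [Fintype S] [Fintype A] [DecidableEq S] {P : S → A → S → ℝ}
  {π : S → A → ℝ}

lemma PPol_mem_rowStochastic (hP : IsKernel P) (hπ : IsPolicy π) :
    PPol P π ∈ Matrix.rowStochastic ℝ S := by
  refine Matrix.mem_rowStochastic_iff_sum.2
    ⟨fun s s' => Finset.sum_nonneg fun a _ => mul_nonneg ((hπ s).1 a) ((hP s a).1 s'), fun s => ?_⟩
  simp only [PPol, Matrix.of_apply]
  rw [Finset.sum_comm]
  simp_rw [← Finset.mul_sum, (hP s _).2, mul_one, (hπ s).2]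

lemma hasSum_occ (hP : IsKernel P) (hπ : IsPolicy π) {γ : ℝ} (hγ0 : 0 ≤ γ) (hγ1 : γ < 1)
    (μ : S → ℝ) :
    HasSum (fun i : ℕ => ((1 - γ) * γ ^ i) • (μ ᵥ* PPol P π ^ i)) (occ P γ μ π) := by
  simpa [occ, mul_smul] using
    ((Matrix.hasSum_vecMul_geom_of_mem_rowStochastic (PPol_mem_rowStochastic hP hπ) hγ0 hγ1
      μ).const_smul (1 - γ))

lemma eratio_occ_le (hP : IsKernel P) (hπ : IsPolicy π) {γ : ℝ} (hγ0 : 0 ≤ γ) (hγ1 : γ < 1)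
    {μ ν : S → ℝ} (hμ : ∀ s, 0 ≤ μ s) :
    eratio (occ P γ μ π) ν ≤
      ENNReal.ofReal (1 - γ) * ∑' i : ℕ, ENNReal.ofReal (γ ^ i) * eratio (μ ᵥ* PPol P π ^ i) ν := by
  have h1γ : 0 ≤ 1 - γ := by linarith
  have hμP : ∀ i s, 0 ≤ (μ ᵥ* PPol P π ^ i) s := fun i =>
    Matrix.nonneg_vecMul_of_mem_rowStochastic
      (Submonoid.pow_mem _ (PPol_mem_rowStochastic hP hπ) i) hμ
  calc eratio (occ P γ μ π) ν
      ≤ ∑' i : ℕ, eratio (((1 - γ) * γ ^ i) • (μ ᵥ* PPol P π ^ i)) ν :=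
        eratio_le_tsum (hasSum_occ hP hπ hγ0 hγ1 μ) fun i s =>
          mul_nonneg (mul_nonneg h1γ (pow_nonneg hγ0 i)) (hμP i s)
    _ ≤ ∑' i : ℕ, ENNReal.ofReal (1 - γ) *
          (ENNReal.ofReal (γ ^ i) * eratio (μ ᵥ* PPol P π ^ i) ν) :=
        ENNReal.tsum_le_tsum fun i => by
          rw [← mul_assoc, ← ENNReal.ofReal_mul h1γ]
          exact eratio_smul_le (mul_nonneg h1γ (pow_nonneg hγ0 i))
    _ = _ := ENNReal.tsum_mul_left

end MDP

theorem stmt_5_general {S A : Type*} [Fintype S] [Fintype A] [DecidableEq S]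
    (P : S → A → S → ℝ) (hP : IsKernel P) (γ : ℝ)
    (hγ0 : 0 ≤ γ) (hγ1 : γ < 1)
    (πs : S → A → ℝ) (hπs : IsPolicy πs)
    (μ ν : S → ℝ) (hμ : IsDist μ) :
    ENNReal.ofReal (1 - γ) * eratio (occ P γ μ πs) ν
      ≤ ENNReal.ofReal ((1 - γ) ^ 2) *
          ∑' i : ℕ, ∑' j : ℕ, ENNReal.ofReal (γ ^ (i + j)) *
            ⨆ π : {π : S → A → ℝ // IsPolicy π},
              eratio ((μ ᵥ* (PPol P πs ^ i)) ᵥ* (PPol P (π : S → A → ℝ) ^ j)) ν := by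
  have h1γ : 0 ≤ 1 - γ := by linarith
  have hterm_le : ∀ i : ℕ, ENNReal.ofReal (γ ^ i) * eratio (μ ᵥ* PPol P πs ^ i) ν ≤
      ∑' j : ℕ, ENNReal.ofReal (γ ^ (i + j)) *
        ⨆ π : {π : S → A → ℝ // IsPolicy π},
          eratio ((μ ᵥ* (PPol P πs ^ i)) ᵥ* (PPol P (π : S → A → ℝ) ^ j)) ν := fun i =>
    calc _ ≤ ENNReal.ofReal (γ ^ (i + 0)) *
          ⨆ π : {π : S → A → ℝ // IsPolicy π},
            eratio ((μ ᵥ* (PPol P πs ^ i)) ᵥ* (PPol P (π : S → A → ℝ) ^ 0)) ν := by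
          rw [add_zero]
          gcongr
          refine le_of_eq_of_le ?_ (le_iSup _ (⟨πs, hπs⟩ : {π : S → A → ℝ // IsPolicy π}))
          simp
      _ ≤ _ := ENNReal.le_tsum 0
  calc ENNReal.ofReal (1 - γ) * eratio (occ P γ μ πs) ν
      ≤ ENNReal.ofReal (1 - γ) * (ENNReal.ofReal (1 - γ) *
          ∑' i : ℕ, ENNReal.ofReal (γ ^ i) * eratio (μ ᵥ* PPol P πs ^ i) ν) := by
        gcongr
        exact eratio_occ_le hP hπs hγ0 hγ1 hμ.1
    _ = ENNReal.ofReal ((1 - γ) ^ 2) *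
          ∑' i : ℕ, ENNReal.ofReal (γ ^ i) * eratio (μ ᵥ* PPol P πs ^ i) ν := by
        rw [sq, ENNReal.ofReal_mul h1γ, mul_assoc]
    _ ≤ _ := by gcongr with i; exact hterm_le i

/-- `(1-γ)·‖d_{μ,π_*}/ν‖_∞ ≤ C*_{μ,ν}` where
`C*_{μ,ν} = (1-γ)² ∑_{i,j≥0} γ^{i+j} sup_π ‖μ (P_{π_*})^i (P_π)^j / ν‖_∞`. -/
theorem stmt_5 {S A : Type*} [Fintype S] [Fintype A] [Nonempty S] [Nonempty A] [DecidableEq S]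
    (P : S → A → S → ℝ) (hP : IsKernel P) (r : S → A → ℝ) (γ : ℝ)
    (hγ0 : 0 ≤ γ) (hγ1 : γ < 1)
    (πs : S → A → ℝ) (hπs : IsPolicy πs)
    (μ ν : S → ℝ) (hμ : IsDist μ) (hν : IsDist ν) :
    ENNReal.ofReal (1 - γ) * eratio (occ P γ μ πs) ν
      ≤ ENNReal.ofReal ((1 - γ) ^ 2) *
          ∑' i : ℕ, ∑' j : ℕ, ENNReal.ofReal (γ ^ (i + j)) *
            ⨆ π : {π : S → A → ℝ // IsPolicy π},
              eratio ((μ ᵥ* (PPol P πs ^ i)) ᵥ* (PPol P (π : S → A → ℝ) ^ j)) ν :=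
  stmt_5_general P hP γ hγ0 hγ1 πs hπs μ ν hμ
end

section
/- Fix N ≥ 1 and consider the MDP with state space S = {1,…,N}, action space A = {1,…,N}, and deterministic transitions P(s'|s,a) = 1 if s' = a and 0 otherwise (from every state, action a leads to state a). Let μ = δ_1 be the Dirac distribution on state 1. Then for every probability distribution ν on S and every constant c such that (μ P_π)(s) ≤ c ν(s) for all deterministic policies π and all states s, one has c ≥ N. Consequently sup_π ‖μ P_π/ν‖_∞ ≥ N for every ν, and since N is arbitrary there is in general no ν making the coefficient sup_π ‖μ P_π/ν‖_∞ bounded uniformly in the MDP. -/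
open Matrix Filter Topology

/-!
Take the policy that always plays action `t`: from `δ_0` it reaches `t` with probability one, so
`1 ≤ c ν(t)` for every state `t`. Summing over the `N` states and using `∑ ν = 1` gives `N ≤ c`.
-/

theorem PPol_deterministic {S A : Type*} [Fintype A] [DecidableEq A]
    (P : S → A → S → ℝ) (f : S → A) :
    PPol P (fun s a => if a = f s then (1 : ℝ) else 0) = Matrix.of fun s s' => P s (f s) s' := by
  ext s s'
  simp [PPol]

theorem indicator_vecMul {n m : Type*} [Fintype n] [DecidableEq n] (M : Matrix n m ℝ) (i : n) :
    (fun j => if j = i then (1 : ℝ) else 0) ᵥ* M = M i := by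
  rw [show (fun j => if j = i then (1 : ℝ) else 0) = Pi.single i 1 from
    funext fun j => (Pi.single_apply i 1 j).symm, single_one_vecMul]
  rfl

theorem IsDist.card_le_of_forall_one_le_mul {S : Type*} [Fintype S] {ν : S → ℝ} (hν : IsDist ν)
    {c : ℝ} (h : ∀ s, 1 ≤ c * ν s) : (Fintype.card S : ℝ) ≤ c :=
  calc (Fintype.card S : ℝ) = ∑ _s : S, (1 : ℝ) := by simp
    _ ≤ ∑ s, c * ν s := Finset.sum_le_sum fun s _ => h s
    _ = c := by rw [← Finset.mul_sum, hν.2, mul_one]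

/-- in the MDP on `Fin N` where action `a` deterministically leads to state `a`,
with `μ = δ_0`, any `c` with `(μ P_π)(s) ≤ c ν(s)` for all deterministic `π` and states `s`
must satisfy `c ≥ N`. -/
theorem stmt_6 (N : ℕ) (hN : 1 ≤ N) (ν : Fin N → ℝ) (hν : IsDist ν) (c : ℝ)
    (hc : ∀ f : Fin N → Fin N, ∀ s : Fin N,
      ((fun s₀ : Fin N => if s₀ = (⟨0, hN⟩ : Fin N) then (1 : ℝ) else 0) ᵥ*
          PPol (fun _ a s' => if s' = a then (1 : ℝ) else 0)
            (fun s a => if a = f s then (1 : ℝ) else 0)) s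
        ≤ c * ν s) :
    (N : ℝ) ≤ c := by
  have reach : ∀ t : Fin N, 1 ≤ c * ν t := fun t => by
    simpa [PPol_deterministic, indicator_vecMul] using hc (fun _ => t) t
  simpa using hν.card_le_of_forall_one_le_mul reach
end
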